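/- arXiv:1312.0451 — 2 statements merged into one kernel-verified Lean document; each statement's English description precedes it below -/
import Mathlib

section
/- Optimality of the Nitzan–Paroush rule: in the committee model with the truth Y uniform on {−1,+1}, expert votes X_i = η_i·Y with (η_1,…,η_n) independent of Y, and assuming Σ_{i=1}^n w_i η_i ≠ 0 for every η ∈ {−1,+1}^n, the rule f^OPT(x) = sign(Σ_{i=1}^n w_i x_i) minimizes the probability of error: for every function f : {−1,+1}^n → {−1,+1}, P(f^OPT(X) ≠ Y) ≤ P(f(X) ≠ Y). -/
open MeasureTheory ProbabilityTheory Finset Real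

/-!
The error probability of a rule `g` is `∑ₓ P(X = x, Y = -g x)`, so a rule that, for every vote
profile `x`, picks the a posteriori more likely value of `Y` has the least error. Since `Y` is
uniform and independent of `η`, `P(X = x, Y = y) = ½ P(η = y x)`, and for independent `η i`
one has `P(η = s) = P(η = -s) · exp (∑ i, w i * s i)`; so the more likely value is the sign of
`∑ i, w i * x i`.
-/

section Decision

variable {Ω β : Type*} [MeasurableSpace Ω] {μ : Measure Ω} {V : Ω → β} {Y : Ω → ℝ}

lemma measure_setOf_ne_eq_sum (S : Finset β) (hVS : ∀ ω, V ω ∈ S)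
    (hV : ∀ x ∈ S, MeasurableSet (V ⁻¹' {x})) (hY : ∀ ω, Y ω = 1 ∨ Y ω = -1)
    {g : β → ℝ} (hg : ∀ x, g x = 1 ∨ g x = -1) :
    μ {ω | g (V ω) ≠ Y ω} = ∑ x ∈ S, μ {ω | V ω = x ∧ Y ω = -g x} := by
  have hfiber : ∀ x, V ⁻¹' {x} ∩ {ω | g (V ω) ≠ Y ω} = {ω | V ω = x ∧ Y ω = -g x} := by
    intro x
    ext ω
    simp only [Set.mem_inter_iff, Set.mem_preimage, Set.mem_singleton_iff, Set.mem_ofPred_eq]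
    refine and_congr_right fun hx => ?_
    rcases hg x with h | h <;> rcases hY ω with h' | h' <;> simp [hx, h, h'] <;> norm_num
  calc μ {ω | g (V ω) ≠ Y ω} = μ.restrict {ω | g (V ω) ≠ Y ω} (V ⁻¹' S) := by
        rw [Set.preimage_eq_univ_iff.mpr fun _ ⟨ω, hω⟩ => hω ▸ hVS ω, Measure.restrict_apply_univ]
    _ = ∑ x ∈ S, μ.restrict {ω | g (V ω) ≠ Y ω} (V ⁻¹' {x}) :=
        (sum_measure_preimage_singleton S hV).symm
    _ = ∑ x ∈ S, μ {ω | V ω = x ∧ Y ω = -g x} :=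
        sum_congr rfl fun x hx => by rw [Measure.restrict_apply (hV x hx), hfiber]

lemma measure_setOf_ne_le_of_forall_le (S : Finset β) (hVS : ∀ ω, V ω ∈ S)
    (hV : ∀ x ∈ S, MeasurableSet (V ⁻¹' {x})) (hY : ∀ ω, Y ω = 1 ∨ Y ω = -1)
    {g₀ g : β → ℝ} (hg₀ : ∀ x, g₀ x = 1 ∨ g₀ x = -1) (hg : ∀ x, g x = 1 ∨ g x = -1)
    (hmap : ∀ x ∈ S, μ {ω | V ω = x ∧ Y ω = -g₀ x} ≤ μ {ω | V ω = x ∧ Y ω = g₀ x}) :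
    μ {ω | g₀ (V ω) ≠ Y ω} ≤ μ {ω | g (V ω) ≠ Y ω} := by
  rw [measure_setOf_ne_eq_sum S hVS hV hY hg₀, measure_setOf_ne_eq_sum S hVS hV hY hg]
  refine sum_le_sum fun x hx => ?_
  have hcases : g x = g₀ x ∨ g x = -g₀ x := by
    rcases hg₀ x with h₀ | h₀ <;> rcases hg x with h | h <;> simp [h₀, h]
  rcases hcases with h | h
  · rw [h]
  · rw [h, neg_neg]
    exact hmap x hx

end Decision

lemma mul_eq_one_or_eq_neg_one {a b : ℝ} (ha : a = 1 ∨ a = -1) (hb : b = 1 ∨ b = -1) :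
    a * b = 1 ∨ a * b = -1 := by
  rcases ha with rfl | rfl <;> rcases hb with rfl | rfl <;> norm_num

lemma zero_le_ite_pos_mul_self (a : ℝ) : 0 ≤ (if 0 < a then 1 else -1) * a := by
  split_ifs with h
  · simpa using h.le
  · simpa using not_lt.mp h

/-- The probability that a `±1`-valued variable with `P(· = 1) = p` takes the value `s = ±1`. -/
noncomputable def signProb (p s : ℝ) : ℝ := if s = 1 then p else 1 - p

lemma signProb_half {s : ℝ} : signProb (1 / 2) s = 1 / 2 := by
  unfold signProb; split_ifs <;> norm_num

lemma signProb_eq_mul_exp {p s : ℝ} (hp : p ∈ Set.Ioo 0 1) (hs : s = 1 ∨ s = -1) :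
    signProb p s = signProb p (-s) * exp (log (p / (1 - p)) * s) := by
  have hodds : 0 < p / (1 - p) := div_pos hp.1 (sub_pos.2 hp.2)
  have hq : 1 - p ≠ 0 := (sub_pos.2 hp.2).ne'
  have hne : (-1 : ℝ) ≠ 1 := by norm_num
  rcases hs with rfl | rfl
  · simp [signProb, hne, exp_log hodds]
    field_simp
  · simp [signProb, hne, exp_neg, exp_log hodds]
    field_simp [hp.1.ne']

lemma prod_signProb_neg_le_prod_signProb {ι : Type*} [Fintype ι] {p s w : ι → ℝ}
    (hp : ∀ i, p i ∈ Set.Ioo 0 1) (hs : ∀ i, s i = 1 ∨ s i = -1)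
    (hw : ∀ i, w i = log (p i / (1 - p i))) (hsum : 0 ≤ ∑ i, w i * s i) :
    ∏ i, signProb (p i) (-s i) ≤ ∏ i, signProb (p i) (s i) := by
  have hnonneg : 0 ≤ ∏ i, signProb (p i) (-s i) := by
    refine prod_nonneg fun i _ => ?_
    unfold signProb; split_ifs <;> linarith [(hp i).1, (hp i).2]
  calc ∏ i, signProb (p i) (-s i) ≤ (∏ i, signProb (p i) (-s i)) * exp (∑ i, w i * s i) :=
        le_mul_of_one_le_right hnonneg (one_le_exp hsum)
    _ = ∏ i, signProb (p i) (s i) := by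
        rw [exp_sum, ← prod_mul_distrib]
        exact prod_congr rfl fun i _ => by rw [hw, ← signProb_eq_mul_exp (hp i) (hs i)]

section Model

variable {Ω ι : Type*} [MeasurableSpace Ω] {μ : Measure Ω}

lemma ProbabilityTheory.IndepFun.measure_mul_eq_and_eq [Countable ι] {η : Ω → ι → ℝ}
    {Y : Ω → ℝ} (hind : IndepFun η Y μ) (x : ι → ℝ) {y : ℝ} (hy : y = 1 ∨ y = -1) :
    μ {ω | (fun i => η ω i * Y ω) = x ∧ Y ω = y} = μ {ω | η ω = y • x} * μ {ω | Y ω = y} := by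
  have hy2 : y * y = 1 := by rcases hy with rfl | rfl <;> norm_num
  have hset : {ω | (fun i => η ω i * Y ω) = x ∧ Y ω = y} = η ⁻¹' {y • x} ∩ Y ⁻¹' {y} := by
    ext ω
    simp only [Set.mem_ofPred_eq, Set.mem_inter_iff, Set.mem_preimage, Set.mem_singleton_iff]
    refine ⟨fun ⟨hx, hY⟩ => ⟨?_, hY⟩, fun ⟨hη, hY⟩ => ⟨?_, hY⟩⟩ <;> subst hY <;> ext i
    · rw [← hx, Pi.smul_apply, smul_eq_mul]
      linear_combination (-η ω i) * hy2
    · rw [hη, Pi.smul_apply, smul_eq_mul]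
      linear_combination x i * hy2
  rw [hset]
  exact hind.measure_inter_preimage_eq_mul _ _ (measurableSet_singleton _)
    (measurableSet_singleton _)

variable [IsProbabilityMeasure μ]

lemma measure_eq_ofReal_signProb {Z : Ω → ℝ} (hZm : Measurable Z) (hZ : ∀ ω, Z ω = 1 ∨ Z ω = -1)
    {q : ℝ} (hq : 0 ≤ q) (h1 : μ {ω | Z ω = 1} = ENNReal.ofReal q) {s : ℝ}
    (hs : s = 1 ∨ s = -1) : μ {ω | Z ω = s} = ENNReal.ofReal (signProb q s) := by
  rcases hs with rfl | rfl
  · simpa [signProb] using h1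
  · have hcompl : {ω | Z ω = -1} = {ω | Z ω = 1}ᶜ := by
      ext ω; rcases hZ ω with h | h <;> simp [h] <;> norm_num
    have hm : MeasurableSet {ω | Z ω = 1} := hZm (measurableSet_singleton 1)
    rw [hcompl, prob_compl_eq_one_sub hm, h1, signProb,
      if_neg (by norm_num), ENNReal.ofReal_sub _ hq, ENNReal.ofReal_one]

variable [Fintype ι]

lemma ProbabilityTheory.iIndepFun.measure_eq_ofReal_prod_signProb {η : ι → Ω → ℝ}
    (hind : iIndepFun η μ) (hm : ∀ i, Measurable (η i)) (hval : ∀ i ω, η i ω = 1 ∨ η i ω = -1)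
    {p : ι → ℝ} (hp : ∀ i, p i ∈ Set.Icc 0 1)
    (hprob : ∀ i, μ {ω | η i ω = 1} = ENNReal.ofReal (p i)) {s : ι → ℝ}
    (hs : ∀ i, s i = 1 ∨ s i = -1) :
    μ {ω | (fun i => η i ω) = s} = ENNReal.ofReal (∏ i, signProb (p i) (s i)) := by
  have hinter : {ω | (fun i => η i ω) = s} = ⋂ i, η i ⁻¹' {s i} := by
    ext ω; simp [funext_iff]
  rw [hinter, hind.meas_iInter fun i => ⟨{s i}, measurableSet_singleton _, rfl⟩,
    ENNReal.ofReal_prod_of_nonneg fun i _ => ?_]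
  · exact prod_congr rfl fun i _ =>
      measure_eq_ofReal_signProb (hm i) (hval i) (hp i).1 (hprob i) (hs i)
  · unfold signProb; split_ifs <;> linarith [(hp i).1, (hp i).2]

end Model

theorem nitzan_paroush_optimality_general
    {Ω : Type*} [MeasurableSpace Ω] (μ : Measure Ω) [IsProbabilityMeasure μ]
    (n : ℕ)
    (p : Fin n → ℝ) (hp : ∀ i, p i ∈ Set.Ioo (0 : ℝ) 1)
    (η : Fin n → Ω → ℝ)
    (hηmeas : ∀ i, Measurable (η i))
    (hηval : ∀ i ω, η i ω = 1 ∨ η i ω = -1)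
    (hηprob : ∀ i, μ {ω | η i ω = 1} = ENNReal.ofReal (p i))
    (hηind : iIndepFun η μ)
    (Y : Ω → ℝ) (hYmeas : Measurable Y)
    (hYval : ∀ ω, Y ω = 1 ∨ Y ω = -1)
    (hYunif : μ {ω | Y ω = 1} = ENNReal.ofReal (1/2))
    (hYind : IndepFun (fun ω i => η i ω) Y μ)
    (w : Fin n → ℝ) (hw : ∀ i, w i = Real.log (p i / (1 - p i)))
    (X : Fin n → Ω → ℝ) (hX : ∀ i ω, X i ω = η i ω * Y ω)
    (fopt : (Fin n → ℝ) → ℝ)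
    (hfopt : ∀ x, fopt x = if 0 < ∑ i, w i * x i then 1 else -1)
    (f : (Fin n → ℝ) → ℝ) (hf : ∀ x, f x = 1 ∨ f x = -1) :
    μ {ω | fopt (fun i => X i ω) ≠ Y ω} ≤ μ {ω | f (fun i => X i ω) ≠ Y ω} := by
  obtain rfl : X = fun i ω => η i ω * Y ω := funext fun i => funext (hX i)
  have hfopt_sign : ∀ x, fopt x = 1 ∨ fopt x = -1 := fun x => by rw [hfopt]; split_ifs <;> simp
  have hfopt_nonneg : ∀ x, 0 ≤ ∑ i, w i * (fopt x * x i) := fun x => by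
    simp_rw [mul_left_comm (w _) (fopt x), ← mul_sum, hfopt]
    exact zero_le_ite_pos_mul_self _
  let S := Fintype.piFinset fun _ : Fin n => ({1, -1} : Finset ℝ)
  have hVm : Measurable fun ω i => η i ω * Y ω :=
    measurable_pi_lambda _ fun i => (hηmeas i).mul hYmeas
  refine measure_setOf_ne_le_of_forall_le S (fun ω => ?_)
    (fun x _ => hVm (measurableSet_singleton x)) hYval hfopt_sign hf fun x hx => ?_
  · simpa [S] using fun i => mul_eq_one_or_eq_neg_one (hηval i ω) (hYval ω)
  have hx_sign : ∀ i, x i = 1 ∨ x i = -1 := by simpa [S] using hx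
  have hneg_sign : -fopt x = 1 ∨ -fopt x = -1 := by rcases hfopt_sign x with h | h <;> simp [h]
  have hY : ∀ y, y = 1 ∨ y = -1 → μ {ω | Y ω = y} = ENNReal.ofReal (1 / 2) := fun y hy => by
    rw [measure_eq_ofReal_signProb hYmeas hYval (by norm_num) hYunif hy, signProb_half]
  have hη := fun s => hηind.measure_eq_ofReal_prod_signProb hηmeas hηval
    (fun i => Set.Ioo_subset_Icc_self (hp i)) hηprob (s := s)
  have hs_sign : ∀ i, fopt x * x i = 1 ∨ fopt x * x i = -1 :=
    fun i => mul_eq_one_or_eq_neg_one (hfopt_sign x) (hx_sign i)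
  rw [hYind.measure_mul_eq_and_eq x hneg_sign, hYind.measure_mul_eq_and_eq x (hfopt_sign x),
    hY _ hneg_sign, hY _ (hfopt_sign x),
    hη (-fopt x • x) fun i => mul_eq_one_or_eq_neg_one hneg_sign (hx_sign i),
    hη (fopt x • x) hs_sign]
  gcongr ENNReal.ofReal ?_ * _
  simp only [Pi.smul_apply, smul_eq_mul, neg_mul]
  exact prod_signProb_neg_le_prod_signProb hp hs_sign hw (hfopt_nonneg x)

/-- Optimality of the Nitzan–Paroush weighted majority rule: with the truth `Y` uniform on
`{−1,+1}` and independent of the correctness indicators, votes `X i = η i * Y`, and assuming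
no ties (`∑ w i * s i ≠ 0` for every sign vector `s`), the rule
`f^OPT x = sign (∑ w i * x i)` minimizes the probability of error among all decision rules. -/
theorem nitzan_paroush_optimality
    {Ω : Type*} [MeasurableSpace Ω] (μ : Measure Ω) [IsProbabilityMeasure μ]
    (n : ℕ) (hn : 1 ≤ n)
    (p : Fin n → ℝ) (hp : ∀ i, p i ∈ Set.Ioo (0 : ℝ) 1)
    (η : Fin n → Ω → ℝ)
    (hηmeas : ∀ i, Measurable (η i))
    (hηval : ∀ i ω, η i ω = 1 ∨ η i ω = -1)
    (hηprob : ∀ i, μ {ω | η i ω = 1} = ENNReal.ofReal (p i))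
    (hηind : iIndepFun η μ)
    (Y : Ω → ℝ) (hYmeas : Measurable Y)
    (hYval : ∀ ω, Y ω = 1 ∨ Y ω = -1)
    (hYunif : μ {ω | Y ω = 1} = ENNReal.ofReal (1/2))
    (hYind : IndepFun (fun ω i => η i ω) Y μ)
    (w : Fin n → ℝ) (hw : ∀ i, w i = Real.log (p i / (1 - p i)))
    (hne : ∀ s : Fin n → ℝ, (∀ i, s i = 1 ∨ s i = -1) → ∑ i, w i * s i ≠ 0)
    (X : Fin n → Ω → ℝ) (hX : ∀ i ω, X i ω = η i ω * Y ω)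
    (fopt : (Fin n → ℝ) → ℝ)
    (hfopt : ∀ x, fopt x = if 0 < ∑ i, w i * x i then 1 else -1)
    (f : (Fin n → ℝ) → ℝ) (hf : ∀ x, f x = 1 ∨ f x = -1) :
    μ {ω | fopt (fun i => X i ω) ≠ Y ω} ≤ μ {ω | f (fun i => X i ω) ≠ Y ω} :=
  nitzan_paroush_optimality_general μ n p hp η hηmeas hηval hηprob hηind Y hYmeas hYval hYunif hYind
    w hw X hX fopt hfopt f hf
end

section
/- Per-expert moment generating function bound: let p ∈ (0,1) with p ≠ 1/2, set w = log(p/(1−p)), and let ξ be a {0,1}-valued random variable with P(ξ = 1) = p and θ = ξ − p. Then for every t ∈ ℝ, E[e^{−t w θ}] = p·e^{−(1−p)wt} + (1−p)·e^{pwt} ≤ exp( (1/2)·(p − 1/2)·w·t² ). -/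
/-!
With `c = w / 2` one has `p = eᶜ / (2 cosh c)` and `2p - 1 = tanh c`, and the two-point moment
generating function factors as `exp (c t tanh c) · cosh (c (t - 1)) / cosh c`. The bound is then the
Kearns–Saul inequality `log cosh (c u) ≤ log cosh c + c tanh c (u² - 1) / 2` at `u = t - 1`. For
`c, u ≥ 0` the difference of its two sides has `u`-derivative `c (u tanh c - tanh (c u))`, which by
concavity of `tanh` on `[0, ∞)` is nonpositive on `[0, 1]` and nonnegative on `[1, ∞)`; so the
difference is smallest at `u = 1`, where it vanishes.
-/

open Real Set MeasureTheory

namespace Real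

lemma hasDerivAt_tanh (x : ℝ) : HasDerivAt tanh (1 / cosh x ^ 2) x := by
  have h := (hasDerivAt_sinh x).div (hasDerivAt_cosh x) (cosh_pos x).ne'
  rw [show cosh x * cosh x - sinh x * sinh x = 1 by nlinarith [cosh_sq x]] at h
  exact h.congr_of_eventuallyEq (.of_forall fun y => tanh_eq_sinh_div_cosh y)

lemma concaveOn_tanh : ConcaveOn ℝ (Ici 0) tanh := by
  have hderiv : deriv tanh = fun x => 1 / cosh x ^ 2 :=
    funext fun x => (hasDerivAt_tanh x).deriv
  refine AntitoneOn.concaveOn_of_deriv (convex_Ici 0)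
    (fun x _ => (hasDerivAt_tanh x).continuousAt.continuousWithinAt)
    (fun x _ => (hasDerivAt_tanh x).differentiableAt.differentiableWithinAt) ?_
  rw [hderiv, interior_Ici]
  intro x hx y hy hxy
  have : cosh x ≤ cosh y := cosh_le_cosh.2 (by rwa [abs_of_pos hx, abs_of_pos hy])
  have := cosh_pos x
  dsimp only
  gcongr

lemma mul_tanh_le_tanh_mul {c u : ℝ} (hc : 0 ≤ c) (hu₀ : 0 ≤ u) (hu₁ : u ≤ 1) :
    u * tanh c ≤ tanh (c * u) := by
  have := concaveOn_tanh.2 (mem_Ici.2 hc) (mem_Ici.2 le_rfl) hu₀ (sub_nonneg.2 hu₁) (by ring)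
  simpa [tanh_zero, mul_comm] using this

lemma tanh_mul_le_mul_tanh {c u : ℝ} (hc : 0 ≤ c) (hu : 1 ≤ u) :
    tanh (c * u) ≤ u * tanh c := by
  have hu₀ : 0 < u := by linarith
  have h := mul_tanh_le_tanh_mul (mul_nonneg hc hu₀.le) (inv_nonneg.2 hu₀.le)
    (inv_le_one_of_one_le₀ hu)
  rwa [mul_inv_cancel_right₀ hu₀.ne', inv_mul_le_iff₀ hu₀] at h

end Real

lemma le_of_hasDerivAt_nonpos_of_nonneg {f f' : ℝ → ℝ} {a b x : ℝ}
    (hf : ∀ y, HasDerivAt f (f' y) y) (hleft : ∀ y ∈ Ioo a b, f' y ≤ 0)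
    (hright : ∀ y, b < y → 0 ≤ f' y) (hx : a ≤ x) : f b ≤ f x := by
  have hcont : Continuous f := continuous_iff_continuousAt.2 fun y => (hf y).continuousAt
  rcases le_total x b with hxb | hbx
  · exact antitoneOn_of_hasDerivWithinAt_nonpos (convex_Icc a b) hcont.continuousOn
      (fun y _ => (hf y).hasDerivWithinAt) (fun y hy => hleft y (by simpa using hy))
      ⟨hx, hxb⟩ ⟨hx.trans hxb, le_rfl⟩ hxb
  · exact monotoneOn_of_hasDerivWithinAt_nonneg (convex_Ici b) hcont.continuousOn
      (fun y _ => (hf y).hasDerivWithinAt) (fun y hy => hright y (by simpa using hy))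
      self_mem_Ici hbx hbx

lemma log_cosh_mul_le {c u : ℝ} (hc : 0 ≤ c) (hu : 0 ≤ u) :
    log (cosh (c * u)) ≤ log (cosh c) + c * tanh c * (u ^ 2 - 1) / 2 := by
  set F : ℝ → ℝ := fun v => c * tanh c * (v ^ 2 - 1) / 2 - log (cosh (c * v))
  have hF : ∀ v, HasDerivAt F (c * (v * tanh c - tanh (c * v))) v := by
    intro v
    have hcosh := (((hasDerivAt_id v).const_mul c).cosh).log (cosh_pos _).ne'
    have hsq := ((hasDerivAt_pow 2 v).sub_const 1).const_mul (c * tanh c) |>.div_const 2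
    refine (hsq.sub hcosh).congr_deriv ?_
    rw [tanh_eq_sinh_div_cosh (c * v)]
    simp only [id, Nat.cast_ofNat]
    ring
  have hmin := le_of_hasDerivAt_nonpos_of_nonneg hF
    (fun y hy => mul_nonpos_of_nonneg_of_nonpos hc
      (sub_nonpos.2 (mul_tanh_le_tanh_mul hc hy.1.le hy.2.le)))
    (fun y hy => mul_nonneg hc (sub_nonneg.2 (tanh_mul_le_mul_tanh hc hy.le))) hu
  simp only [F, mul_one, one_pow, sub_self, mul_zero, zero_div, zero_sub] at hmin
  linarith

lemma cosh_mul_le_cosh_mul_exp (c u : ℝ) :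
    cosh (c * u) ≤ cosh c * exp (c * tanh c * (u ^ 2 - 1) / 2) := by
  have hc : c * tanh c = |c| * tanh |c| := by
    rcases le_total 0 c with h | h
    · rw [abs_of_nonneg h]
    · rw [abs_of_nonpos h, tanh_neg]; ring
  rw [← cosh_abs (c * u), abs_mul, ← cosh_abs c, hc, ← sq_abs u,
    ← exp_log (cosh_pos _), ← exp_log (cosh_pos |c|), ← exp_add, exp_le_exp]
  exact log_cosh_mul_le (abs_nonneg c) (abs_nonneg u)

lemma eq_exp_div_two_cosh_of_mem_Ioo {p : ℝ} (hp : p ∈ Ioo 0 1) :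
    p = exp (log (p / (1 - p)) / 2) / (2 * cosh (log (p / (1 - p)) / 2)) := by
  obtain ⟨hp0, hp1⟩ := hp
  set c := log (p / (1 - p)) / 2
  have hc : exp c * exp c = p / (1 - p) := by
    rw [← exp_add, show c + c = log (p / (1 - p)) by ring, exp_log (div_pos hp0 (by linarith))]
  rw [cosh_eq, eq_div_iff (by positivity), exp_neg]
  have h1p : 1 - p ≠ 0 := by linarith
  field_simp at hc ⊢
  linear_combination (-1) * hc

lemma two_mul_sub_one_eq_tanh {p c : ℝ} (hp : p = exp c / (2 * cosh c)) :
    2 * p - 1 = tanh c := by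
  rw [hp, tanh_eq_sinh_div_cosh, sinh_eq, cosh_eq]
  field_simp
  ring

lemma two_point_mgf_eq {p c : ℝ} (hp : p = exp c / (2 * cosh c)) (t : ℝ) :
    p * exp (-(1 - p) * (2 * c) * t) + (1 - p) * exp (p * (2 * c) * t) =
      exp (c * tanh c * t) * (cosh (c * (t - 1)) / cosh c) := by
  have hcp : p * (2 * cosh c) = exp c := by rw [hp, div_mul_cancel₀ _ (by positivity)]
  have hcq : (1 - p) * (2 * cosh c) = exp (-c) := by
    rw [sub_mul, hcp, cosh_eq]; ring
  have h₁ : exp c * exp (-(1 - p) * (2 * c) * t) =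
      exp (c * (2 * p - 1) * t) * exp (-(c * (t - 1))) := by
    rw [← exp_add, ← exp_add]; ring_nf
  have h₂ : exp (-c) * exp (p * (2 * c) * t) =
      exp (c * (2 * p - 1) * t) * exp (c * (t - 1)) := by
    rw [← exp_add, ← exp_add]; ring_nf
  rw [← two_mul_sub_one_eq_tanh hp, cosh_eq (c * (t - 1)), div_div, mul_div_assoc',
    eq_div_iff (by positivity)]
  linear_combination exp (-(1 - p) * (2 * c) * t) * hcp + exp (p * (2 * c) * t) * hcq + h₁ + h₂

lemma two_point_mgf_le {p c : ℝ} (hp : p = exp c / (2 * cosh c)) (t : ℝ) :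
    p * exp (-(1 - p) * (2 * c) * t) + (1 - p) * exp (p * (2 * c) * t) ≤
      exp ((1 / 2) * (p - 1 / 2) * (2 * c) * t ^ 2) := by
  have hcosh : cosh (c * (t - 1)) / cosh c ≤ exp (c * tanh c * ((t - 1) ^ 2 - 1) / 2) := by
    rw [div_le_iff₀' (cosh_pos c)]
    exact cosh_mul_le_cosh_mul_exp c (t - 1)
  calc _ = exp (c * tanh c * t) * (cosh (c * (t - 1)) / cosh c) := two_point_mgf_eq hp t
    _ ≤ exp (c * tanh c * t) * exp (c * tanh c * ((t - 1) ^ 2 - 1) / 2) := by gcongr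
    _ = exp ((1 / 2) * (p - 1 / 2) * (2 * c) * t ^ 2) := by
      rw [← exp_add, ← two_mul_sub_one_eq_tanh hp]
      ring_nf

lemma integral_comp_eq_of_bernoulli {Ω : Type*} [MeasurableSpace Ω] (μ : Measure Ω)
    [IsProbabilityMeasure μ] {ξ : Ω → ℝ} (hξ : Measurable ξ) (hval : ∀ ω, ξ ω = 0 ∨ ξ ω = 1)
    {p : ℝ} (hp : 0 ≤ p) (hprob : μ {ω | ξ ω = 1} = ENNReal.ofReal p) (g : ℝ → ℝ) :
    ∫ ω, g (ξ ω) ∂μ = p * g 1 + (1 - p) * g 0 := by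
  have hS : MeasurableSet {ω | ξ ω = 1} := hξ (measurableSet_singleton 1)
  have hsplit : (fun ω => g (ξ ω)) =
      fun ω => g 0 + {ω | ξ ω = 1}.indicator (fun _ => g 1 - g 0) ω := by
    funext ω
    rcases hval ω with h | h <;> simp [h]
  rw [hsplit, integral_add (integrable_const _) ((integrable_const _).indicator hS),
    integral_const, integral_indicator_const _ hS, measureReal_def, measureReal_def, hprob,
    ENNReal.toReal_ofReal hp, measure_univ, ENNReal.toReal_one, one_smul, smul_eq_mul]
  ring

theorem per_expert_mgf_bound_general
    {Ω : Type*} [MeasurableSpace Ω] (μ : Measure Ω) [IsProbabilityMeasure μ]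
    (p : ℝ) (hp : p ∈ Set.Ioo (0 : ℝ) 1)
    (w : ℝ) (hw : w = Real.log (p / (1 - p)))
    (ξ : Ω → ℝ) (hξmeas : Measurable ξ)
    (hξval : ∀ ω, ξ ω = 0 ∨ ξ ω = 1)
    (hξprob : μ {ω | ξ ω = 1} = ENNReal.ofReal p)
    (t : ℝ) :
    (∫ ω, Real.exp (-t * w * (ξ ω - p)) ∂μ =
        p * Real.exp (-(1 - p) * w * t) + (1 - p) * Real.exp (p * w * t)) ∧
    ∫ ω, Real.exp (-t * w * (ξ ω - p)) ∂μ ≤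
        Real.exp ((1/2) * (p - 1/2) * w * t ^ 2) := by
  have hmgf : ∫ ω, exp (-t * w * (ξ ω - p)) ∂μ =
      p * exp (-(1 - p) * w * t) + (1 - p) * exp (p * w * t) := by
    rw [integral_comp_eq_of_bernoulli μ hξmeas hξval hp.1.le hξprob
      fun x => exp (-t * w * (x - p))]
    ring_nf
  have hpc : p = exp (w / 2) / (2 * cosh (w / 2)) := by
    rw [hw]; exact eq_exp_div_two_cosh_of_mem_Ioo hp
  have hbound := two_point_mgf_le hpc t
  rw [mul_div_cancel₀ w two_ne_zero] at hbound
  exact ⟨hmgf, hmgf ▸ hbound⟩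

/-- Per-expert moment generating function bound: for `p ∈ (0,1)`, `p ≠ 1/2`,
`w = log(p/(1−p))` and a `{0,1}`-valued random variable `ξ` with `P(ξ = 1) = p`,
setting `θ = ξ − p`, for every real `t`,
`E[e^{−twθ}] = p·e^{−(1−p)wt} + (1−p)·e^{pwt} ≤ exp((1/2)(p − 1/2)w t²)`. -/
theorem per_expert_mgf_bound
    {Ω : Type*} [MeasurableSpace Ω] (μ : Measure Ω) [IsProbabilityMeasure μ]
    (p : ℝ) (hp : p ∈ Set.Ioo (0 : ℝ) 1) (hp' : p ≠ 1/2)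
    (w : ℝ) (hw : w = Real.log (p / (1 - p)))
    (ξ : Ω → ℝ) (hξmeas : Measurable ξ)
    (hξval : ∀ ω, ξ ω = 0 ∨ ξ ω = 1)
    (hξprob : μ {ω | ξ ω = 1} = ENNReal.ofReal p)
    (t : ℝ) :
    (∫ ω, Real.exp (-t * w * (ξ ω - p)) ∂μ =
        p * Real.exp (-(1 - p) * w * t) + (1 - p) * Real.exp (p * w * t)) ∧
    ∫ ω, Real.exp (-t * w * (ξ ω - p)) ∂μ ≤
        Real.exp ((1/2) * (p - 1/2) * w * t ^ 2) :=
  per_expert_mgf_bound_general μ p hp w hw ξ hξmeas hξval hξprob t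
end
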